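/- Let S = ⟨n_1, n_2, n_3⟩ be a 3-generated numerical semigroup with exactly three Betti elements. Then S is bland, i.e., LD(S) = 1/max Δ(S). -/

import Mathlib

/-!
Any two factorizations of an element are joined by a chain of trades at Betti elements, so every
gap of a length set is at most the largest length difference `D` within a single Betti element.
For three generators each Betti element is some `c_i * g i`, with `c_i` the least positive multiple
of `g i` in the semigroup of the other two generators; when these three elements are distinct,
`c_i * g i` has only two factorizations, `c_i • e_i` and one avoiding `g i`. So the Betti element
realising `D` has length set `{a, a + D}`: thus `max Δ(S) = D`, and its length density `1 / D` is
minimal, because a length set with `m` elements spans at most `(m - 1) * max Δ(S)`.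
-/

open Finset

namespace LengthDensity

/-- The set of factorizations of `n` with respect to generators `g`. -/
def facs {k : ℕ} (g : Fin k → ℕ) (n : ℕ) : Set (Fin k → ℕ) :=
  {z | ∑ i, z i * g i = n}

/-- Membership in the numerical semigroup generated by `g`. -/
def mem {k : ℕ} (g : Fin k → ℕ) (n : ℕ) : Prop := (facs g n).Nonempty

/-- The set of factorization lengths of `n`. -/
def lengthSet {k : ℕ} (g : Fin k → ℕ) (n : ℕ) : Set ℕ :=
  (fun z => ∑ i, z i) '' facs g n

/-- Length density of an element. -/
noncomputable def LD {k : ℕ} (g : Fin k → ℕ) (n : ℕ) : ℝ :=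
  (((lengthSet g n).ncard : ℝ) - 1) /
    (((sSup (lengthSet g n) : ℕ) : ℝ) - ((sInf (lengthSet g n) : ℕ) : ℝ))

/-- Length density of the semigroup: infimum of `LD` over elements with
non-singleton length set. -/
noncomputable def LDsgp {k : ℕ} (g : Fin k → ℕ) : ℝ :=
  sInf {x : ℝ | ∃ n : ℕ, 2 ≤ (lengthSet g n).ncard ∧ x = LD g n}

/-- The delta set (successive gaps) of a set of naturals. -/
def deltaOf (L : Set ℕ) : Set ℕ :=
  {d | ∃ a ∈ L, ∃ b ∈ L, a < b ∧ (∀ c ∈ L, ¬(a < c ∧ c < b)) ∧ d = b - a}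

/-- The delta set of an element. -/
def delta {k : ℕ} (g : Fin k → ℕ) (n : ℕ) : Set ℕ := deltaOf (lengthSet g n)

/-- The delta set of the semigroup. -/
def Delta {k : ℕ} (g : Fin k → ℕ) : Set ℕ := ⋃ n : ℕ, delta g n

/-- Adjacency in the factorization graph of `n`: two factorizations of `n`
sharing a positive coordinate. -/
def adj {k : ℕ} (g : Fin k → ℕ) (n : ℕ) (z z' : Fin k → ℕ) : Prop :=
  z ∈ facs g n ∧ z' ∈ facs g n ∧ ∃ i, 0 < z i ∧ 0 < z' i

/-- `n` is a Betti element: its factorization graph is disconnected. -/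
def IsBetti {k : ℕ} (g : Fin k → ℕ) (n : ℕ) : Prop :=
  ∃ z ∈ facs g n, ∃ z' ∈ facs g n, ¬ Relation.ReflTransGen (adj g n) z z'

/-- The semigroup is tasty: `LD(S) > 1 / max Δ(S)`. -/
def Tasty {k : ℕ} (g : Fin k → ℕ) : Prop := LDsgp g > 1 / ((sSup (Delta g) : ℕ) : ℝ)

/-- The semigroup is bland: `LD(S) = 1 / max Δ(S)`. -/
def Bland {k : ℕ} (g : Fin k → ℕ) : Prop := LDsgp g = 1 / ((sSup (Delta g) : ℕ) : ℝ)

/-- `g` is a minimal generating set: no generator is a nonnegative integer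
combination of the others. -/
def IsMinGen {k : ℕ} (g : Fin k → ℕ) : Prop :=
  ∀ i, ¬ ∃ z : Fin k → ℕ, z i = 0 ∧ ∑ j, z j * g j = g i

/-- `n` is a non-atom of the semigroup generated by `g`:
it is a sum of two nonzero elements. -/
def NonAtom {k : ℕ} (g : Fin k → ℕ) (n : ℕ) : Prop :=
  ∃ a b : ℕ, 0 < a ∧ 0 < b ∧ mem g a ∧ mem g b ∧ n = a + b

section Factorizations

variable {k : ℕ} {g : Fin k → ℕ}

lemma mem_facs_iff {z : Fin k → ℕ} {n : ℕ} : z ∈ facs g n ↔ ∑ i, z i * g i = n := Iff.rfl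

lemma eq_of_mem_facs {z : Fin k → ℕ} {m n : ℕ} (hm : z ∈ facs g m) (hn : z ∈ facs g n) : m = n :=
  hm.symm.trans hn

lemma zero_mem_facs : (0 : Fin k → ℕ) ∈ facs g 0 := by
  simp [mem_facs_iff]

lemma weight_add (a b : Fin k → ℕ) :
    ∑ i, (a + b) i * g i = ∑ i, a i * g i + ∑ i, b i * g i := by
  simp only [Pi.add_apply, add_mul, Finset.sum_add_distrib]

lemma length_add (a b : Fin k → ℕ) : ∑ i, (a + b) i = ∑ i, a i + ∑ i, b i := by
  simp only [Pi.add_apply, Finset.sum_add_distrib]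

lemma add_mem_facs {a b : Fin k → ℕ} {m n : ℕ} (ha : a ∈ facs g m) (hb : b ∈ facs g n) :
    a + b ∈ facs g (m + n) := by
  rw [mem_facs_iff, weight_add, ha, hb]

lemma mem_facs_sub {a b : Fin k → ℕ} {m n : ℕ} (hab : a + b ∈ facs g n) (hb : b ∈ facs g m) :
    a ∈ facs g (n - m) := by
  rw [mem_facs_iff, weight_add, hb] at hab
  rw [mem_facs_iff]
  omega

lemma add_mem_facs_of_add_mem_facs {a b b' : Fin k → ℕ} {m n : ℕ} (h : a + b ∈ facs g n)
    (hb : b ∈ facs g m) (hb' : b' ∈ facs g m) : a + b' ∈ facs g n := by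
  rw [mem_facs_iff, weight_add] at h ⊢
  rw [← h, hb, hb']

lemma single_mem_facs (i : Fin k) (t : ℕ) : Pi.single i t ∈ facs g (t * g i) := by
  simp [mem_facs_iff, Pi.single_apply]

lemma sum_mem_lengthSet {z : Fin k → ℕ} {n : ℕ} (hz : z ∈ facs g n) :
    ∑ i, z i ∈ lengthSet g n :=
  ⟨z, hz, rfl⟩

lemma apply_mul_le_of_mem_facs {z : Fin k → ℕ} {n : ℕ} (hz : z ∈ facs g n) (i : Fin k) :
    z i * g i ≤ n :=
  hz ▸ Finset.single_le_sum (f := fun j => z j * g j) (fun _ _ => Nat.zero_le _) (mem_univ i)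

lemma eq_zero_of_mem_facs_zero (hpos : ∀ i, 0 < g i) {z : Fin k → ℕ} (hz : z ∈ facs g 0) :
    z = 0 := by
  funext i
  have := apply_mul_le_of_mem_facs hz i
  have := hpos i
  simp only [Pi.zero_apply, nonpos_iff_eq_zero, mul_eq_zero] at *
  omega

lemma facs_finite (hpos : ∀ i, 0 < g i) (n : ℕ) : (facs g n).Finite := by
  refine (Set.Finite.pi fun _ : Fin k => Set.finite_Iic n).subset fun z hz i _ => ?_
  exact (Nat.le_mul_of_pos_right _ (hpos i)).trans (apply_mul_le_of_mem_facs hz i)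

lemma lengthSet_finite (hpos : ∀ i, 0 < g i) (n : ℕ) : (lengthSet g n).Finite :=
  (facs_finite hpos n).image _

lemma exists_eq_add_single {u : Fin k → ℕ} {i : Fin k} {t : ℕ} (ht : t ≤ u i) :
    ∃ u', u = u' + (Pi.single i t : Fin k → ℕ) := by
  refine ⟨u - Pi.single i t, funext fun j => ?_⟩
  by_cases hj : j = i
  · subst hj; simp; omega
  · simp [hj]

end Factorizations

section BettiSteps

variable {k : ℕ} {g : Fin k → ℕ}

def BettiStep (g : Fin k → ℕ) (u v : Fin k → ℕ) : Prop :=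
  ∃ β, IsBetti g β ∧ ∃ z a b, a ∈ facs g β ∧ b ∈ facs g β ∧ u = z + a ∧ v = z + b

lemma BettiStep.add_right {u v : Fin k → ℕ} (h : BettiStep g u v) (e : Fin k → ℕ) :
    BettiStep g (u + e) (v + e) := by
  obtain ⟨β, hβ, z, a, b, ha, hb, rfl, rfl⟩ := h
  exact ⟨β, hβ, z + e, a, b, ha, hb, add_right_comm _ _ _, add_right_comm _ _ _⟩

lemma BettiStep.mem_facs {u v : Fin k → ℕ} {n : ℕ} (h : BettiStep g u v) (hu : u ∈ facs g n) :
    v ∈ facs g n := by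
  obtain ⟨β, -, z, a, b, ha, hb, rfl, rfl⟩ := h
  exact add_mem_facs_of_add_mem_facs hu ha hb

lemma BettiStep.length_le {u v : Fin k → ℕ} {D : ℕ} (h : BettiStep g u v)
    (hD : ∀ β, IsBetti g β → ∀ a ∈ facs g β, ∀ b ∈ facs g β, ∑ i, b i ≤ ∑ i, a i + D) :
    ∑ i, v i ≤ ∑ i, u i + D := by
  obtain ⟨β, hβ, z, a, b, ha, hb, rfl, rfl⟩ := h
  rw [length_add, length_add]
  linarith [hD β hβ a ha b hb]

theorem reflTransGen_bettiStep (hpos : ∀ i, 0 < g i) {n : ℕ} {z z' : Fin k → ℕ}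
    (hz : z ∈ facs g n) (hz' : z' ∈ facs g n) : Relation.ReflTransGen (BettiStep g) z z' := by
  induction n using Nat.strong_induction_on generalizing z z' with
  | _ n ih =>
  by_cases hn : IsBetti g n
  · exact .single ⟨n, hn, 0, z, z', hz, hz', (zero_add z).symm, (zero_add z').symm⟩
  -- Adjacent factorizations share a generator; cancelling it lands in a smaller element.
  have hconn : Relation.ReflTransGen (adj g n) z z' := by
    by_contra h
    exact hn ⟨z, hz, z', hz', h⟩
  refine Relation.ReflTransGen.lift' id (fun u v huv => ?_) z z' hconn
  obtain ⟨hu, hv, i, hui, hvi⟩ := huv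
  obtain ⟨u', rfl⟩ := exists_eq_add_single (t := 1) hui
  obtain ⟨v', rfl⟩ := exists_eq_add_single (t := 1) hvi
  have hlt : n - 1 * g i < n := by
    have := apply_mul_le_of_mem_facs hu i
    have := hpos i
    simp only [Pi.add_apply, Pi.single_eq_same, add_mul, one_mul] at *
    omega
  exact (ih _ hlt (mem_facs_sub hu (single_mem_facs i 1))
    (mem_facs_sub hv (single_mem_facs i 1))).lift _ fun a b hab => hab.add_right _

end BettiSteps

section LengthSets

variable {k : ℕ} {g : Fin k → ℕ}

lemma le_add_of_reflTransGen {α : Type*} {r : α → α → Prop} {f : α → ℕ} {D x y : ℕ} {a b : α}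
    (hstep : ∀ u v, r u v → f v ≤ f u + D) (hab : Relation.ReflTransGen r a b)
    (ha : f a ≤ x) (hb : y ≤ f b)
    (hgap : ∀ c, Relation.ReflTransGen r a c → f c ≤ x ∨ y ≤ f c) : y ≤ x + D := by
  induction hab with
  | refl => omega
  | tail hac hcd ih =>
    rcases hgap _ hac with h | h
    · linarith [hstep _ _ hcd]
    · exact ih h

theorem le_of_mem_delta (hpos : ∀ i, 0 < g i) {D : ℕ}
    (hD : ∀ β, IsBetti g β → ∀ a ∈ facs g β, ∀ b ∈ facs g β, ∑ i, b i ≤ ∑ i, a i + D)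
    {n d : ℕ} (hd : d ∈ delta g n) : d ≤ D := by
  obtain ⟨x, ⟨za, hza, hx⟩, y, ⟨zb, hzb, hy⟩, -, hcons, rfl⟩ := hd
  have := le_add_of_reflTransGen (f := fun z => ∑ i, z i) (fun u v huv => huv.length_le hD)
    (reflTransGen_bettiStep hpos hza hzb) hx.le hy.ge fun c hc => ?_
  · omega
  have hcn : c ∈ facs g n := by
    induction hc with
    | refl => exact hza
    | tail _ h ih => exact h.mem_facs ih
  have := hcons _ (sum_mem_lengthSet hcn)
  omega

lemma sSup_sub_sInf_le_of_deltaOf_le {L : Set ℕ} (hL : L.Finite) {D : ℕ}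
    (hD : ∀ d ∈ deltaOf L, d ≤ D) : sSup L - sInf L ≤ (L.ncard - 1) * D := by
  lift L to Finset ℕ using hL with s
  rw [Set.ncard_coe_finset]
  induction s using Finset.induction_on_max with
  | empty => simp
  | insert a s has ih =>
    rcases s.eq_empty_or_nonempty with rfl | hne
    · simp
    rw [Finset.coe_insert] at hD ⊢
    have hsupmem : sSup (s : Set ℕ) ∈ s := Nat.sSup_mem hne.to_set (s.finite_toSet.bddAbove)
    have hsup : sSup (insert a (s : Set ℕ)) = a :=
      IsGreatest.csSup_eq ⟨Set.mem_insert _ _, Set.forall_mem_insert.2 ⟨le_rfl,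
        fun x hx => (has x hx).le⟩⟩
    have hinf : sInf (insert a (s : Set ℕ)) = sInf (s : Set ℕ) := by
      rw [csInf_insert (OrderBot.bddBelow _) hne.to_set]
      exact min_eq_right (Nat.sInf_le hsupmem |>.trans (has _ hsupmem).le)
    have htop : a - sSup (s : Set ℕ) ≤ D := by
      refine hD _ ⟨_, Set.mem_insert_of_mem _ hsupmem, a, Set.mem_insert _ _,
        has _ hsupmem, fun c hc hlt => ?_, rfl⟩
      rcases hc with rfl | hc
      · exact lt_irrefl _ hlt.2
      · exact absurd (le_csSup s.finite_toSet.bddAbove hc) (not_le.2 hlt.1)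
    have hgaps : ∀ d ∈ deltaOf (s : Set ℕ), d ≤ D := by
      rintro d ⟨x, hx, y, hy, hxy, hcons, hd⟩
      refine hD d ⟨x, Set.mem_insert_of_mem _ hx, y, Set.mem_insert_of_mem _ hy, hxy,
        fun c hc hlt => ?_, hd⟩
      rcases hc with rfl | hc
      · exact absurd (has y hy) (not_lt.2 hlt.2.le)
      · exact hcons c hc hlt
    have hrest := ih hgaps
    rw [hsup, hinf, Finset.card_insert_of_notMem fun h => lt_irrefl _ (has a h)]
    have hle : sInf (s : Set ℕ) ≤ sSup (s : Set ℕ) := Nat.sInf_le hsupmem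
    have hcard : (s.card + 1 - 1) * D = (s.card - 1) * D + D := by
      rw [Nat.add_sub_cancel, ← Nat.succ_mul, Nat.succ_eq_add_one, Nat.sub_add_cancel hne.card_pos]
    omega

lemma one_div_le_LD {n D : ℕ} (hfin : (lengthSet g n).Finite) (h2 : 2 ≤ (lengthSet g n).ncard)
    (hD : ∀ d ∈ delta g n, d ≤ D) : 1 / (D : ℝ) ≤ LD g n := by
  obtain ⟨x, y, hx, hy, hxy⟩ := (Set.one_lt_ncard_iff hfin).1 h2
  have hlt : sInf (lengthSet g n) < sSup (lengthSet g n) := by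
    rcases Nat.lt_or_gt_of_ne hxy with h | h
    · exact (Nat.sInf_le hx).trans_lt (h.trans_le (le_csSup hfin.bddAbove hy))
    · exact (Nat.sInf_le hy).trans_lt (h.trans_le (le_csSup hfin.bddAbove hx))
  have hspan := sSup_sub_sInf_le_of_deltaOf_le hfin hD
  have hDpos : 0 < D := Nat.pos_of_ne_zero fun h => by rw [h, mul_zero] at hspan; omega
  have hspanR : ((sSup (lengthSet g n) : ℕ) : ℝ) - (sInf (lengthSet g n) : ℕ) ≤
      ((lengthSet g n).ncard - 1 : ℝ) * D := by
    have := (Nat.cast_le (α := ℝ)).2 hspan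
    push_cast [Nat.cast_sub hlt.le, Nat.cast_sub (by omega : 1 ≤ (lengthSet g n).ncard)] at this
    exact this
  have hsub : (0 : ℝ) < ((sSup (lengthSet g n) : ℕ) : ℝ) - (sInf (lengthSet g n) : ℕ) := by
    have : ((sInf (lengthSet g n) : ℕ) : ℝ) < (sSup (lengthSet g n) : ℕ) := by exact_mod_cast hlt
    linarith
  rw [LD, div_le_div_iff₀ (by exact_mod_cast hDpos) hsub, one_mul]
  exact hspanR

lemma LD_eq_of_lengthSet_eq_pair {n a D : ℕ} (hD : 0 < D) (hn : lengthSet g n = {a, a + D}) :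
    LD g n = 1 / (D : ℝ) := by
  rw [LD, hn, Set.ncard_pair (by omega), csSup_pair, csInf_pair,
    max_eq_right (by omega), min_eq_left (by omega)]
  push_cast
  ring

lemma mem_deltaOf_pair {a D : ℕ} (hD : 0 < D) : D ∈ deltaOf {a, a + D} := by
  refine ⟨a, Set.mem_insert _ _, a + D, Set.mem_insert_of_mem _ rfl, by omega, ?_, by omega⟩
  rintro c (rfl | rfl) <;> omega

theorem bland_of_delta_le (hpos : ∀ i, 0 < g i) {D n a : ℕ} (hD : 0 < D)
    (hΔ : ∀ d ∈ Delta g, d ≤ D) (hn : lengthSet g n = {a, a + D}) : Bland g := by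
  have hDmem : D ∈ Delta g := Set.mem_iUnion.2 ⟨n, by rw [delta, hn]; exact mem_deltaOf_pair hD⟩
  rw [Bland, IsGreatest.csSup_eq ⟨hDmem, hΔ⟩, LDsgp]
  refine IsLeast.csInf_eq ⟨⟨n, ?_, (LD_eq_of_lengthSet_eq_pair hD hn).symm⟩, ?_⟩
  · rw [hn, Set.ncard_pair (by omega)]
  · rintro x ⟨m, hm, rfl⟩
    exact one_div_le_LD (lengthSet_finite hpos m) hm fun d hd => hΔ d (Set.mem_iUnion.2 ⟨m, hd⟩)

lemma deltaOf_nonempty {L : Set ℕ} {x y : ℕ} (hx : x ∈ L) (hy : y ∈ L) (hxy : x < y) :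
    (deltaOf L).Nonempty := by
  obtain ⟨hmL, hxm⟩ := Nat.sInf_mem (⟨y, hy, hxy⟩ : {m | m ∈ L ∧ x < m}.Nonempty)
  exact ⟨_, x, hx, _, hmL, hxm, fun c hc hlt => not_le.2 hlt.2 (Nat.sInf_le ⟨hc, hlt.1⟩), rfl⟩

-- `g j * g i` has the lengths `g i` and `g j`.
lemma Delta_nonempty_of_apply_ne {i j : Fin k} (h : g i ≠ g j) : (Delta g).Nonempty := by
  have hi : g j ∈ lengthSet g (g j * g i) := by
    simpa using sum_mem_lengthSet (single_mem_facs (g := g) i (g j))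
  have hj : g i ∈ lengthSet g (g j * g i) := by
    simpa [mul_comm] using sum_mem_lengthSet (single_mem_facs (g := g) j (g i))
  rcases h.lt_or_gt with h | h
  · obtain ⟨d, hd⟩ := deltaOf_nonempty hj hi h
    exact ⟨d, Set.mem_iUnion.2 ⟨_, hd⟩⟩
  · obtain ⟨d, hd⟩ := deltaOf_nonempty hi hj h
    exact ⟨d, Set.mem_iUnion.2 ⟨_, hd⟩⟩

theorem bland_of_ncard_lengthSet_le_two (hpos : ∀ i, 0 < g i)
    (hfin : {n | IsBetti g n}.Finite) (hne : {n | IsBetti g n}.Nonempty)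
    (h2 : ∀ β, IsBetti g β → (lengthSet g β).ncard ≤ 2) (hΔ : (Delta g).Nonempty) : Bland g := by
  obtain ⟨β, hβ, hmax⟩ := Set.exists_max_image _
    (fun n => sSup (lengthSet g n) - sInf (lengthSet g n)) hfin hne
  set D := sSup (lengthSet g β) - sInf (lengthSet g β)
  have hstep : ∀ β', IsBetti g β' → ∀ a ∈ facs g β', ∀ b ∈ facs g β', ∑ i, b i ≤ ∑ i, a i + D := by
    intro β' hβ' a ha b hb
    have hb' := le_csSup (lengthSet_finite hpos β').bddAbove (sum_mem_lengthSet hb)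
    have ha' := Nat.sInf_le (sum_mem_lengthSet ha)
    have := hmax β' hβ'
    omega
  have hΔD : ∀ d ∈ Delta g, d ≤ D := fun d hd => by
    obtain ⟨m, hm⟩ := Set.mem_iUnion.1 hd
    exact le_of_mem_delta hpos hstep hm
  have hDpos : 0 < D := by
    obtain ⟨d, hd⟩ := hΔ
    obtain ⟨m, x, -, y, -, hxy, -, rfl⟩ := Set.mem_iUnion.1 hd
    have := hΔD _ hd
    omega
  have hL := lengthSet_finite hpos β
  have hLne : (lengthSet g β).Nonempty := let ⟨z, hz, _⟩ := hβ; ⟨_, sum_mem_lengthSet hz⟩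
  have hsup := Nat.sSup_mem hLne hL.bddAbove
  have hinf := Nat.sInf_mem hLne
  have hpair : lengthSet g β = {sInf (lengthSet g β), sInf (lengthSet g β) + D} := by
    refine (Set.eq_of_subset_of_ncard_le ?_ ?_ hL).symm
    · rw [Set.insert_subset_iff, Set.singleton_subset_iff, Nat.add_sub_cancel' (by omega)]
      exact ⟨hinf, hsup⟩
    · rw [Set.ncard_pair (by omega)]
      exact h2 β hβ
  exact bland_of_delta_le hpos hDpos hΔD hpair

end LengthSets

section FactorizationGraph

variable {k : ℕ} {g : Fin k → ℕ} {n : ℕ}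

instance : Std.Symm (adj g n) := ⟨fun _ _ ⟨hu, hv, i, hui, hvi⟩ => ⟨hv, hu, i, hvi, hui⟩⟩

lemma apply_eq_zero_or_of_not_reflTransGen {x y : Fin k → ℕ} (hx : x ∈ facs g n)
    (hy : y ∈ facs g n) (h : ¬Relation.ReflTransGen (adj g n) x y) (i : Fin k) :
    x i = 0 ∨ y i = 0 := by
  by_contra! hxy
  exact h (.single ⟨hx, hy, i, Nat.pos_of_ne_zero hxy.1, Nat.pos_of_ne_zero hxy.2⟩)

lemma mem_facs_of_reflTransGen {x y : Fin k → ℕ} (hx : x ∈ facs g n)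
    (h : Relation.ReflTransGen (adj g n) x y) : y ∈ facs g n := by
  rcases h.cases_tail with rfl | ⟨_, _, h⟩
  exacts [hx, h.2.1]

end FactorizationGraph

section ThreeGenerators

variable {g : Fin 3 → ℕ}

lemma Fin3.eq_or_eq_or_eq_or_eq {a b c d : Fin 3} (hab : a ≠ b) (hcd : c ≠ d) :
    a = c ∨ a = d ∨ b = c ∨ b = d := by
  revert a b c d
  decide

lemma Fin3.exists_ne_and_ne (i j : Fin 3) : ∃ l, i ≠ l ∧ j ≠ l := by
  revert i j
  decide

lemma Fin3.sum_eq (f : Fin 3 → ℕ) {i j l : Fin 3} (hij : i ≠ j) (hil : i ≠ l) (hjl : j ≠ l) :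
    ∑ m, f m = f i + f j + f l := by
  rw [Fin.sum_univ_three]
  fin_cases i <;> fin_cases j <;> fin_cases l <;> simp_all <;> ring

/-- The paper's `c_i`: the least positive `t` such that `t * g i` lies in the semigroup generated
by the other two generators. -/
noncomputable def minMul (g : Fin 3 → ℕ) (i : Fin 3) : ℕ :=
  sInf {t | 0 < t ∧ ∃ w ∈ facs g (t * g i), w i = 0}

lemma minMul_le {i : Fin 3} {t : ℕ} {w : Fin 3 → ℕ} (ht : 0 < t) (hw : w ∈ facs g (t * g i))
    (hwi : w i = 0) : minMul g i ≤ t :=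
  Nat.sInf_le ⟨ht, w, hw, hwi⟩

lemma minMul_spec (hpos : ∀ i, 0 < g i) (i : Fin 3) :
    0 < minMul g i ∧ ∃ w ∈ facs g (minMul g i * g i), w i = 0 := by
  obtain ⟨j, hj⟩ := exists_ne i
  refine Nat.sInf_mem (s := {t | 0 < t ∧ ∃ w ∈ facs g (t * g i), w i = 0})
    ⟨g j, hpos j, Pi.single j (g i), ?_, Pi.single_eq_of_ne hj.symm _⟩
  simpa [mul_comm] using single_mem_facs (g := g) j (g i)

lemma eq_single_of_mem_facs_minMul (hpos : ∀ i, 0 < g i) {i : Fin 3} {u : Fin 3 → ℕ}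
    (hu : u ∈ facs g (minMul g i * g i)) (hui : 0 < u i) : u = Pi.single i (minMul g i) := by
  obtain ⟨u', hu'⟩ := exists_eq_add_single (le_refl (u i))
  have hu'i : u' i = 0 := by
    have := congr_fun hu' i
    simp only [Pi.add_apply, Pi.single_eq_same] at this
    omega
  have hle : u i ≤ minMul g i :=
    Nat.le_of_mul_le_mul_right (apply_mul_le_of_mem_facs hu i) (hpos i)
  rw [hu'] at hu
  have hrest : u' ∈ facs g ((minMul g i - u i) * g i) := by
    rw [Nat.sub_mul]
    exact mem_facs_sub hu (single_mem_facs i _)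
  have hc : u i = minMul g i := by
    by_contra hne
    have := minMul_le (by omega) hrest hu'i
    omega
  rw [hc, Nat.sub_self, zero_mul] at hrest
  rw [hu', eq_zero_of_mem_facs_zero hpos hrest, zero_add, hc]

lemma exists_reflTransGen_two_pos_of_pure (hpos : ∀ i, 0 < g i) {n : ℕ} {i : Fin 3}
    (hn : n ≠ minMul g i * g i) {x y : Fin 3 → ℕ} (hx : x ∈ facs g n) (hxi : ∀ j ≠ i, x j = 0)
    (hy : y ∈ facs g n) (hxy : ¬Relation.ReflTransGen (adj g n) x y) :
    ∃ x', Relation.ReflTransGen (adj g n) x x' ∧ ∃ a b, a ≠ b ∧ 0 < x' a ∧ 0 < x' b := by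
  have hxeq : x = Pi.single i (x i) := by
    funext j
    by_cases hj : j = i
    · subst hj; simp
    · simp [hj, hxi j hj]
  have hnx : n = x i * g i := eq_of_mem_facs (by rwa [hxeq] at hx) (single_mem_facs i (x i))
  have hxpos : 0 < x i := by
    by_contra! h0
    rw [Nat.le_zero.1 h0, zero_mul] at hnx
    subst hnx
    rw [eq_zero_of_mem_facs_zero hpos hx, eq_zero_of_mem_facs_zero hpos hy] at hxy
    exact hxy .refl
  have hyi : y i = 0 := (apply_eq_zero_or_of_not_reflTransGen hx hy hxy i).resolve_left hxpos.ne'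
  have hc : minMul g i < x i :=
    (minMul_le hxpos (hnx ▸ hy) hyi).lt_of_ne fun h => hn (by rw [hnx, h])
  obtain ⟨hcpos, w, hw, hwi⟩ := minMul_spec hpos i
  obtain ⟨j, hj⟩ : ∃ j, 0 < w j := by
    by_contra! h
    have hw0 : w = 0 := funext fun j => Nat.le_zero.1 (h j)
    have := eq_of_mem_facs (hw0 ▸ hw) zero_mem_facs
    exact (Nat.mul_pos hcpos (hpos i)).ne' this
  have hji : j ≠ i := fun h => by rw [h, hwi] at hj; exact lt_irrefl _ hj
  have hx' : Pi.single i (x i - minMul g i) + w ∈ facs g n := by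
    have := add_mem_facs (single_mem_facs (g := g) i (x i - minMul g i)) hw
    rwa [← Nat.add_mul, Nat.sub_add_cancel hc.le, ← hnx] at this
  refine ⟨_, .single ⟨hx, hx', i, hxpos, ?_⟩, i, j, hji.symm, ?_, ?_⟩
  · simp only [Pi.add_apply, Pi.single_eq_same, hwi]
    omega
  · simp only [Pi.add_apply, Pi.single_eq_same, hwi]
    omega
  · simp only [Pi.add_apply, Pi.single_eq_of_ne hji]
    omega

theorem exists_eq_minMul_mul_of_isBetti (hpos : ∀ i, 0 < g i) {n : ℕ} (hn : IsBetti g n) :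
    ∃ i, n = minMul g i * g i := by
  -- Both sides of a disconnection of `∇_n` reach factorizations with two positive coordinates,
  -- and among three generators two such supports always meet.
  by_contra! hne
  have key : ∀ x ∈ facs g n, ∀ y ∈ facs g n, ¬Relation.ReflTransGen (adj g n) x y →
      ∃ x', Relation.ReflTransGen (adj g n) x x' ∧ ∃ a b, a ≠ b ∧ 0 < x' a ∧ 0 < x' b := by
    intro x hx y hy hxy
    by_cases h : ∃ a b, a ≠ b ∧ 0 < x a ∧ 0 < x b
    · exact ⟨x, .refl, h⟩
    obtain ⟨i, hi⟩ : ∃ i, ∀ j ≠ i, x j = 0 := by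
      push Not at h
      by_cases h' : ∃ i, 0 < x i
      · obtain ⟨i, hi⟩ := h'
        exact ⟨i, fun j hj => Nat.le_zero.1 (h i j hj.symm hi)⟩
      · push Not at h'
        exact ⟨0, fun j _ => Nat.le_zero.1 (h' j)⟩
    exact exists_reflTransGen_two_pos_of_pure hpos (hne i) hx hi hy hxy
  obtain ⟨x, hx, y, hy, hxy⟩ := hn
  obtain ⟨x', hxx', a, b, hab, hxa, hxb⟩ := key x hx y hy hxy
  have hx'y : ¬Relation.ReflTransGen (adj g n) x' y := fun h => hxy (hxx'.trans h)
  obtain ⟨y', hyy', c, d, hcd, hyc, hyd⟩ :=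
    key y hy x' (mem_facs_of_reflTransGen hx hxx') fun h => hx'y (Std.Symm.symm _ _ h)
  have hdisj := apply_eq_zero_or_of_not_reflTransGen (mem_facs_of_reflTransGen hx hxx')
    (mem_facs_of_reflTransGen hy hyy') fun h => hx'y (h.trans (Std.Symm.symm _ _ hyy'))
  rcases Fin3.eq_or_eq_or_eq_or_eq hab hcd with rfl | rfl | rfl | rfl
  · have := hdisj a; omega
  · have := hdisj a; omega
  · have := hdisj b; omega
  · have := hdisj b; omega

lemma minMul_mul_le_of_eq (hpos : ∀ i, 0 < g i) {j l : Fin 3} (hjl : j ≠ l) {r : ℕ}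
    (h : minMul g j * g j = r * g l) : minMul g l * g l ≤ minMul g j * g j := by
  have hr : 0 < r := Nat.pos_of_ne_zero fun hr => by
    rw [hr, zero_mul] at h
    exact (Nat.mul_pos (minMul_spec hpos j).1 (hpos j)).ne' h
  rw [h]
  refine Nat.mul_le_mul_right _ (minMul_le hr ?_ (Pi.single_eq_of_ne hjl.symm (minMul g j)))
  rw [← h]
  exact single_mem_facs j _

/-- Trading `c_j • e_j` inside `w` for `v` gives a factorization of `c_i * g i` using `g i`, which
can only be `c_i • e_i`; then `w = c_j • e_j` and `c_i * g i = c_j * g j`. -/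
lemma apply_eq_zero_of_mem_facs_minMul (hpos : ∀ i, 0 < g i)
    (hinj : Function.Injective fun i => minMul g i * g i) {i j : Fin 3} (hij : i ≠ j)
    {w : Fin 3 → ℕ} (hw : w ∈ facs g (minMul g i * g i)) (hwi : w i = 0)
    (hwj : minMul g j ≤ w j) {v : Fin 3 → ℕ} (hv : v ∈ facs g (minMul g j * g j)) : v i = 0 := by
  by_contra hvi
  obtain ⟨w₀, rfl⟩ := exists_eq_add_single hwj
  have hu := eq_single_of_mem_facs_minMul hpos
    (add_mem_facs_of_add_mem_facs hw (single_mem_facs j _) hv) (by simp only [Pi.add_apply]; omega)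
  have hw₀ : w₀ = 0 := funext fun m => by
    by_cases hm : m = i
    · subst hm
      simpa [Pi.single_eq_of_ne hij] using hwi
    · have := congr_fun hu m
      simp only [Pi.add_apply, Pi.single_eq_of_ne hm] at this
      simp only [Pi.zero_apply]
      omega
  rw [hw₀, zero_add] at hw
  exact hij (hinj (eq_of_mem_facs hw (single_mem_facs j _)))

lemma minMul_mul_le_of_mem_facs (hpos : ∀ i, 0 < g i)
    (hinj : Function.Injective fun i => minMul g i * g i) {i j l : Fin 3} (hij : i ≠ j)
    (hil : i ≠ l) (hjl : j ≠ l) {w : Fin 3 → ℕ} (hw : w ∈ facs g (minMul g i * g i))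
    (hwi : w i = 0) (hwj : minMul g j ≤ w j) : minMul g l * g l ≤ minMul g j * g j := by
  obtain ⟨-, v, hv, hvj⟩ := minMul_spec hpos j
  have hvi := apply_eq_zero_of_mem_facs_minMul hpos hinj hij hw hwi hwj hv
  refine minMul_mul_le_of_eq hpos hjl (r := v l) ?_
  rw [mem_facs_iff, Fin3.sum_eq _ hij hil hjl, hvi, hvj] at hv
  simpa using hv.symm

lemma apply_le_of_mem_facs_minMul (hpos : ∀ i, 0 < g i)
    (hinj : Function.Injective fun i => minMul g i * g i) {i j : Fin 3} (hij : i ≠ j)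
    {w w' : Fin 3 → ℕ} (hw : w ∈ facs g (minMul g i * g i)) (hwi : w i = 0)
    (hw' : w' ∈ facs g (minMul g i * g i)) (hw'i : w' i = 0) : w j ≤ w' j := by
  obtain ⟨l, hil, hjl⟩ := Fin3.exists_ne_and_ne i j
  by_contra! hlt
  have hsum := hw.trans hw'.symm
  rw [Fin3.sum_eq _ hij hil hjl, Fin3.sum_eq _ hij hil hjl, hwi, hw'i] at hsum
  have hmono := Nat.mul_le_mul_right (g j) hlt.le
  have hex : (w j - w' j) * g j = (w' l - w l) * g l := by
    rw [Nat.sub_mul, Nat.sub_mul]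
    omega
  have hl : 0 < w' l - w l := Nat.pos_of_ne_zero fun h => by
    rw [h, zero_mul] at hex
    exact (Nat.mul_pos (Nat.sub_pos_of_lt hlt) (hpos j)).ne' hex
  have hcj : minMul g j ≤ w j := by
    refine (minMul_le (Nat.sub_pos_of_lt hlt) ?_ (Pi.single_eq_of_ne hjl (w' l - w l))).trans
      (Nat.sub_le _ _)
    rw [hex]
    exact single_mem_facs l _
  have hcl : minMul g l ≤ w' l := by
    refine (minMul_le hl ?_ (Pi.single_eq_of_ne hjl.symm (w j - w' j))).trans (Nat.sub_le _ _)
    rw [← hex]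
    exact single_mem_facs j _
  exact hjl (hinj (le_antisymm
    (minMul_mul_le_of_mem_facs hpos hinj hil hij hjl.symm hw' hw'i hcl)
    (minMul_mul_le_of_mem_facs hpos hinj hij hil hjl hw hwi hcj)))

theorem eq_of_mem_facs_minMul (hpos : ∀ i, 0 < g i)
    (hinj : Function.Injective fun i => minMul g i * g i) {i : Fin 3} {w w' : Fin 3 → ℕ}
    (hw : w ∈ facs g (minMul g i * g i)) (hwi : w i = 0)
    (hw' : w' ∈ facs g (minMul g i * g i)) (hw'i : w' i = 0) : w = w' := by
  funext j
  by_cases hj : j = i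
  · rw [hj, hwi, hw'i]
  · exact le_antisymm (apply_le_of_mem_facs_minMul hpos hinj (Ne.symm hj) hw hwi hw' hw'i)
      (apply_le_of_mem_facs_minMul hpos hinj (Ne.symm hj) hw' hw'i hw hwi)

lemma ncard_lengthSet_minMul_mul_le_two (hpos : ∀ i, 0 < g i)
    (hinj : Function.Injective fun i => minMul g i * g i) (i : Fin 3) :
    (lengthSet g (minMul g i * g i)).ncard ≤ 2 := by
  obtain ⟨-, w, hw, hwi⟩ := minMul_spec hpos i
  have hsub : facs g (minMul g i * g i) ⊆ {Pi.single i (minMul g i), w} := by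
    intro u hu
    rcases Nat.eq_zero_or_pos (u i) with h | h
    · exact Or.inr (eq_of_mem_facs_minMul hpos hinj hu h hw hwi)
    · exact Or.inl (eq_single_of_mem_facs_minMul hpos hu h)
  calc (lengthSet g (minMul g i * g i)).ncard
      ≤ ((fun z => ∑ i, z i) '' {Pi.single i (minMul g i), w}).ncard :=
        Set.ncard_le_ncard (Set.image_mono hsub) (Set.toFinite _)
    _ ≤ 2 := by
        rw [Set.image_pair]
        exact (Set.ncard_insert_le _ _).trans (by rw [Set.ncard_singleton])

lemma minMul_mul_injective (hpos : ∀ i, 0 < g i) (hbetti : {n | IsBetti g n}.ncard = 3) :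
    Function.Injective fun i => minMul g i * g i := by
  have hsub : {n | IsBetti g n} ⊆ Set.range fun i => minMul g i * g i := fun n hn => by
    obtain ⟨i, rfl⟩ := exists_eq_minMul_mul_of_isBetti hpos hn
    exact ⟨i, rfl⟩
  rw [← Set.injOn_univ, ← Set.ncard_image_iff (Set.toFinite _)]
  refine le_antisymm (Set.ncard_image_le (Set.toFinite _)) ?_
  have := Set.ncard_le_ncard hsub (Set.toFinite _)
  rw [Set.image_univ, Set.ncard_univ, Nat.card_eq_fintype_card, Fintype.card_fin]
  omega

lemma minMul_eq_one_of_apply_eq (hpos : ∀ i, 0 < g i) {i j : Fin 3} (hij : i ≠ j)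
    (h : g i = g j) : minMul g i = 1 := by
  refine le_antisymm (minMul_le one_pos ?_ (Pi.single_eq_of_ne hij 1)) (minMul_spec hpos i).1
  rw [h]
  exact single_mem_facs j 1

lemma injective_of_minMul_mul_injective (hpos : ∀ i, 0 < g i)
    (hinj : Function.Injective fun i => minMul g i * g i) : Function.Injective g := by
  intro i j h
  by_contra hij
  refine hij (hinj ?_)
  simp only [minMul_eq_one_of_apply_eq hpos hij h,
    minMul_eq_one_of_apply_eq hpos (Ne.symm hij) h.symm, h]

end ThreeGenerators

theorem stmt8_general (g : Fin 3 → ℕ) (hpos : ∀ i, 0 < g i)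
    (hbetti : {n : ℕ | IsBetti g n}.ncard = 3) :
    Bland g := by
  have hinj := minMul_mul_injective hpos hbetti
  have hg : g 0 ≠ g 1 := (injective_of_minMul_mul_injective hpos hinj).ne (by decide)
  refine bland_of_ncard_lengthSet_le_two hpos (Set.finite_of_ncard_ne_zero (by omega))
    (Set.nonempty_of_ncard_ne_zero (by omega)) (fun β hβ => ?_) (Delta_nonempty_of_apply_ne hg)
  obtain ⟨i, rfl⟩ := exists_eq_minMul_mul_of_isBetti hpos hβ
  exact ncard_lengthSet_minMul_mul_le_two hpos hinj i

theorem stmt8 (g : Fin 3 → ℕ) (hpos : ∀ i, 0 < g i)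
    (hgcd : Finset.univ.gcd g = 1) (hmin : IsMinGen g)
    (hbetti : {n : ℕ | IsBetti g n}.ncard = 3) :
    Bland g :=
  stmt8_general g hpos hbetti
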